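/- Let c be an integer and R_c = ℚ[a,b]/(b⁴, a⁴ + c·a³·b). Let P̃ = (1−b²)⁴·((1+a)⁴ + c·b·(1+a)³)·((1−a)⁴ − c·b·(1−a)³) ∈ R_c and for each i let p_i = (−1)ⁱ times the homogeneous degree-2i component of P̃ (with deg a = deg b = 1). Then p₁·p₂ = −6c³ · a³b³ in R_c. (Equivalently: the Pontryagin number p₁p₂[X¹²_c] of the projectivization X¹²_c = P((c·γ¹) ⊕ ε³) over ℂP³ equals −6c³.) -/
import Mathlib

open MvPolynomial

namespace HW2

noncomputable def a : MvPolynomial (Fin 2) ℚ := X 0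
noncomputable def b : MvPolynomial (Fin 2) ℚ := X 1

noncomputable def I (c : ℤ) : Ideal (MvPolynomial (Fin 2) ℚ) :=
  Ideal.span {b ^ 4, a ^ 4 + C (c : ℚ) * (a ^ 3 * b)}

noncomputable def Pt (c : ℤ) : MvPolynomial (Fin 2) ℚ :=
  (1 - b ^ 2) ^ 4 * ((1 + a) ^ 4 + C (c : ℚ) * b * (1 + a) ^ 3) *
    ((1 - a) ^ 4 - C (c : ℚ) * b * (1 - a) ^ 3)

/-- `p c i` is `(-1)^i` times the homogeneous degree-`2*i` component of `Pt c`
(with `deg a = deg b = 1`), i.e. the `i`-th Pontryagin class. -/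
noncomputable def p (c : ℤ) (i : ℕ) : MvPolynomial (Fin 2) ℚ :=
  ((-1 : ℚ) ^ i) • homogeneousComponent (2 * i) (Pt c)

lemma ih (q : ℚ) (i j n : ℕ) (hn : i + j = n) :
    (C q * (a ^ i * b ^ j) : MvPolynomial (Fin 2) ℚ).IsHomogeneous n := by
  subst hn
  have := (isHomogeneous_C (Fin 2) q).mul
    (((isHomogeneous_X ℚ (0 : Fin 2)).pow i).mul ((isHomogeneous_X ℚ (1 : Fin 2)).pow j))
  simpa [a, b] using this

noncomputable def h0 (c : ℤ) : MvPolynomial (Fin 2) ℚ :=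
  C (1:ℚ) * (a^0 * b^0)

noncomputable def h2 (c : ℤ) : MvPolynomial (Fin 2) ℚ :=
  C (-4:ℚ) * (a^0 * b^2) + C (-1 * (c:ℚ)^2) * (a^0 * b^2) + C (-2 * (c:ℚ)) * (a^1 * b^1) + C (-4:ℚ) * (a^2 * b^0)

noncomputable def h4 (c : ℤ) : MvPolynomial (Fin 2) ℚ :=
  C (6:ℚ) * (a^0 * b^4) + C (4 * (c:ℚ)^2) * (a^0 * b^4) + C (8 * (c:ℚ)) * (a^1 * b^3) + C (16:ℚ) * (a^2 * b^2) + C (3 * (c:ℚ)^2) * (a^2 * b^2) + C (6 * (c:ℚ)) * (a^3 * b^1) + C (6:ℚ) * (a^4 * b^0)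

noncomputable def h6 (c : ℤ) : MvPolynomial (Fin 2) ℚ :=
  C (-4:ℚ) * (a^0 * b^6) + C (-6 * (c:ℚ)^2) * (a^0 * b^6) + C (-12 * (c:ℚ)) * (a^1 * b^5) + C (-24:ℚ) * (a^2 * b^4) + C (-12 * (c:ℚ)^2) * (a^2 * b^4) + C (-24 * (c:ℚ)) * (a^3 * b^3) + C (-24:ℚ) * (a^4 * b^2) + C (-3 * (c:ℚ)^2) * (a^4 * b^2) + C (-6 * (c:ℚ)) * (a^5 * b^1) + C (-4:ℚ) * (a^6 * b^0)

noncomputable def h8 (c : ℤ) : MvPolynomial (Fin 2) ℚ :=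
  C (1:ℚ) * (a^0 * b^8) + C (4 * (c:ℚ)^2) * (a^0 * b^8) + C (8 * (c:ℚ)) * (a^1 * b^7) + C (16:ℚ) * (a^2 * b^6) + C (18 * (c:ℚ)^2) * (a^2 * b^6) + C (36 * (c:ℚ)) * (a^3 * b^5) + C (36:ℚ) * (a^4 * b^4) + C (12 * (c:ℚ)^2) * (a^4 * b^4) + C (24 * (c:ℚ)) * (a^5 * b^3) + C (16:ℚ) * (a^6 * b^2) + C (1 * (c:ℚ)^2) * (a^6 * b^2) + C (2 * (c:ℚ)) * (a^7 * b^1) + C (1:ℚ) * (a^8 * b^0)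

noncomputable def h10 (c : ℤ) : MvPolynomial (Fin 2) ℚ :=
  C (-1 * (c:ℚ)^2) * (a^0 * b^10) + C (-2 * (c:ℚ)) * (a^1 * b^9) + C (-4:ℚ) * (a^2 * b^8) + C (-12 * (c:ℚ)^2) * (a^2 * b^8) + C (-24 * (c:ℚ)) * (a^3 * b^7) + C (-24:ℚ) * (a^4 * b^6) + C (-18 * (c:ℚ)^2) * (a^4 * b^6) + C (-36 * (c:ℚ)) * (a^5 * b^5) + C (-24:ℚ) * (a^6 * b^4) + C (-4 * (c:ℚ)^2) * (a^6 * b^4) + C (-8 * (c:ℚ)) * (a^7 * b^3) + C (-4:ℚ) * (a^8 * b^2)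

noncomputable def h12 (c : ℤ) : MvPolynomial (Fin 2) ℚ :=
  C (3 * (c:ℚ)^2) * (a^2 * b^10) + C (6 * (c:ℚ)) * (a^3 * b^9) + C (6:ℚ) * (a^4 * b^8) + C (12 * (c:ℚ)^2) * (a^4 * b^8) + C (24 * (c:ℚ)) * (a^5 * b^7) + C (16:ℚ) * (a^6 * b^6) + C (6 * (c:ℚ)^2) * (a^6 * b^6) + C (12 * (c:ℚ)) * (a^7 * b^5) + C (6:ℚ) * (a^8 * b^4)

noncomputable def h14 (c : ℤ) : MvPolynomial (Fin 2) ℚ :=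
  C (-3 * (c:ℚ)^2) * (a^4 * b^10) + C (-6 * (c:ℚ)) * (a^5 * b^9) + C (-4:ℚ) * (a^6 * b^8) + C (-4 * (c:ℚ)^2) * (a^6 * b^8) + C (-8 * (c:ℚ)) * (a^7 * b^7) + C (-4:ℚ) * (a^8 * b^6)

noncomputable def h16 (c : ℤ) : MvPolynomial (Fin 2) ℚ :=
  C (1 * (c:ℚ)^2) * (a^6 * b^10) + C (2 * (c:ℚ)) * (a^7 * b^9) + C (1:ℚ) * (a^8 * b^8)

lemma mem_h0 (c : ℤ) : h0 c ∈ homogeneousSubmodule (Fin 2) ℚ 0 := by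
  unfold h0
  repeat apply Submodule.add_mem
  all_goals exact ih _ _ _ _ (by norm_num)

lemma mem_h2 (c : ℤ) : h2 c ∈ homogeneousSubmodule (Fin 2) ℚ 2 := by
  unfold h2
  repeat apply Submodule.add_mem
  all_goals exact ih _ _ _ _ (by norm_num)

lemma mem_h4 (c : ℤ) : h4 c ∈ homogeneousSubmodule (Fin 2) ℚ 4 := by
  unfold h4
  repeat apply Submodule.add_mem
  all_goals exact ih _ _ _ _ (by norm_num)

lemma mem_h6 (c : ℤ) : h6 c ∈ homogeneousSubmodule (Fin 2) ℚ 6 := by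
  unfold h6
  repeat apply Submodule.add_mem
  all_goals exact ih _ _ _ _ (by norm_num)

lemma mem_h8 (c : ℤ) : h8 c ∈ homogeneousSubmodule (Fin 2) ℚ 8 := by
  unfold h8
  repeat apply Submodule.add_mem
  all_goals exact ih _ _ _ _ (by norm_num)

lemma mem_h10 (c : ℤ) : h10 c ∈ homogeneousSubmodule (Fin 2) ℚ 10 := by
  unfold h10
  repeat apply Submodule.add_mem
  all_goals exact ih _ _ _ _ (by norm_num)

lemma mem_h12 (c : ℤ) : h12 c ∈ homogeneousSubmodule (Fin 2) ℚ 12 := by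
  unfold h12
  repeat apply Submodule.add_mem
  all_goals exact ih _ _ _ _ (by norm_num)

lemma mem_h14 (c : ℤ) : h14 c ∈ homogeneousSubmodule (Fin 2) ℚ 14 := by
  unfold h14
  repeat apply Submodule.add_mem
  all_goals exact ih _ _ _ _ (by norm_num)

lemma mem_h16 (c : ℤ) : h16 c ∈ homogeneousSubmodule (Fin 2) ℚ 16 := by
  unfold h16
  repeat apply Submodule.add_mem
  all_goals exact ih _ _ _ _ (by norm_num)

lemma Pt_decomp (c : ℤ) : Pt c = h0 c + h2 c + h4 c + h6 c + h8 c + h10 c + h12 c + h14 c + h16 c := by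
  unfold Pt h0 h2 h4 h6 h8 h10 h12 h14 h16 a b
  simp only [map_neg, map_mul, map_pow, map_ofNat, map_one, one_mul, pow_one]
  ring

lemma hc2 (c : ℤ) : homogeneousComponent 2 (Pt c) = h2 c := by
  rw [Pt_decomp]
  simp only [map_add, homogeneousComponent_of_mem (mem_h0 c), homogeneousComponent_of_mem (mem_h2 c), homogeneousComponent_of_mem (mem_h4 c), homogeneousComponent_of_mem (mem_h6 c), homogeneousComponent_of_mem (mem_h8 c), homogeneousComponent_of_mem (mem_h10 c), homogeneousComponent_of_mem (mem_h12 c), homogeneousComponent_of_mem (mem_h14 c), homogeneousComponent_of_mem (mem_h16 c)]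
  norm_num

lemma hc4 (c : ℤ) : homogeneousComponent 4 (Pt c) = h4 c := by
  rw [Pt_decomp]
  simp only [map_add, homogeneousComponent_of_mem (mem_h0 c), homogeneousComponent_of_mem (mem_h2 c), homogeneousComponent_of_mem (mem_h4 c), homogeneousComponent_of_mem (mem_h6 c), homogeneousComponent_of_mem (mem_h8 c), homogeneousComponent_of_mem (mem_h10 c), homogeneousComponent_of_mem (mem_h12 c), homogeneousComponent_of_mem (mem_h14 c), homogeneousComponent_of_mem (mem_h16 c)]
  norm_num

lemma p1_eq (c : ℤ) : p c 1 = -(h2 c) := by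
  rw [p]; norm_num [hc2]

lemma p2_eq (c : ℤ) : p c 2 = h4 c := by
  rw [p]; norm_num [hc4]

theorem pontryagin_number (c : ℤ) :
    Ideal.Quotient.mk (I c) (p c 1 * p c 2) =
      Ideal.Quotient.mk (I c) (C (-6 * (c : ℚ) ^ 3) * (a ^ 3 * b ^ 3)) := by
  rw [p1_eq, p2_eq, Ideal.Quotient.eq, I]
  rw [Ideal.mem_span_pair]
  refine ⟨C (24:ℚ) * (a^0 * b^2) + C (22 * (c:ℚ)^2) * (a^0 * b^2) + C (4 * (c:ℚ)^4) * (a^0 * b^2) + C (44 * (c:ℚ)) * (a^1 * b^1) + C (16 * (c:ℚ)^3) * (a^1 * b^1) + C (88:ℚ) * (a^2 * b^0) + C (60 * (c:ℚ)^2) * (a^2 * b^0) + C (3 * (c:ℚ)^4) * (a^2 * b^0), C (88:ℚ) * (a^0 * b^2) + C (18 * (c:ℚ)^2) * (a^0 * b^2) + C (12 * (c:ℚ)) * (a^1 * b^1) + C (24:ℚ) * (a^2 * b^0), ?_⟩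
  unfold h2 h4 a b
  simp only [map_neg, map_mul, map_pow, map_ofNat, map_one, one_mul, pow_one]
  ring

end HW2
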